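/- Let s ≥ 1, h₁, h₂ be integers with 0 ≤ h₁ ≤ h₂ ≤ s, and let r ≥ 0 be a real number with r ≠ 1. Define F(z₁, …, z_s, w₁, …, w_s) = ∏_{i=1}^s ∏_{j=1}^s (1 − z_i·w_j)^{−1}, which is holomorphic in a neighbourhood of the point where all variables equal −r. Then the mixed partial derivative (∂/∂w₁)⋯(∂/∂w_{s−h₂})·(∂/∂z₁)⋯(∂/∂z_{s−h₁}) F, evaluated at z₁ = ⋯ = z_s = w₁ = ⋯ = w_s = −r, equals ( (−s·r)^{h₂−h₁} / (1 − r²)^{s²+2s−h₁−h₂} ) · Σ_{k=0}^{s−h₂} C(s−h₂, k)·C(s−h₁, h₂−h₁+k)·(s−k−h₂)!·(s²r²)^k. -/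

import Mathlib

/-!
Where no `1 - z_i w_j` vanishes, the logarithmic derivative of `F` in `z_i` is
`g_i = ∑_j w_j / (1 - z_i w_j)`, which does not involve the other `z`'s; hence
`∂_{z_1} ⋯ ∂_{z_a} F = F g_1 ⋯ g_a`. A derivative in `w_j` sends `F ∏_{i ∈ A} g_i` to
`(∂_{w_j} log F) F ∏_{i ∈ A} g_i + ∑_{i ∈ A} (∂_{w_j} g_i) F ∏_{A \ {i}} g_i`, and these
coefficients involve only `z` and `w_j`, so they commute with the other `w`-derivatives.
At the point where all variables equal `c`, with `q = (1 - c²)⁻¹` and `X = s c q`, one has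
`F = q^{s²}`, `g_i = ∂_{w_j} log F = X` and `∂_{w_j} g_i = q²`. So the value `T(a, b)` of `b`
derivatives in `w` of `F g_1 ⋯ g_a` obeys `T(a, 0) = q^{s²} X^a` and
`T(a, b + 1) = X T(a, b) + a q² T(a - 1, b)`, which is solved by the rook polynomial
`q^{s²} ∑_k C(b, k) a!/(a-k)! X^{a+b-2k} q^{2k}`; reindexing `k ↦ b - k` at `c = -r` gives the
stated sum.
-/

open Function Set Filter Topology Finset
open scoped ContDiff

namespace MixedDeriv

/-- The partial derivative of a function of finitely many complex variables
with respect to the variable `k`. -/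
noncomputable def pd {ι : Type*} [DecidableEq ι] (k : ι) (F : (ι → ℂ) → ℂ) : (ι → ℂ) → ℂ :=
  fun v => deriv (fun t => F (Function.update v k t)) (v k)

/-- `F(z, w) = ∏_{i=1}^s ∏_{j=1}^s (1 - z_i w_j)⁻¹`, with the `z`-variables indexed by
`Sum.inl` and the `w`-variables indexed by `Sum.inr`. -/
noncomputable def FF (s : ℕ) : ((Fin s ⊕ Fin s) → ℂ) → ℂ :=
  fun v => ∏ i : Fin s, ∏ j : Fin s, (1 - v (Sum.inl i) * v (Sum.inr j))⁻¹

/-- The list of the first `s - h₂` `w`-variables followed by the first `s - h₁`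
`z`-variables. -/
def varList (s h₁ h₂ : ℕ) : List (Fin s ⊕ Fin s) :=
  ((List.finRange (s - h₂)).map fun j => Sum.inr (Fin.castLE (Nat.sub_le s h₂) j)) ++
    ((List.finRange (s - h₁)).map fun i => Sum.inl (Fin.castLE (Nat.sub_le s h₁) i))

/-- The mixed partial derivative
`(∂/∂w₁)⋯(∂/∂w_{s-h₂}) (∂/∂z₁)⋯(∂/∂z_{s-h₁}) F`. -/
noncomputable def mixedDerivF (s h₁ h₂ : ℕ) : ((Fin s ⊕ Fin s) → ℂ) → ℂ :=
  (varList s h₁ h₂).foldr pd (FF s)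

section PartialDeriv

variable {ι : Type*} [DecidableEq ι] {U : Set (ι → ℂ)} {F G : (ι → ℂ) → ℂ}

lemma eventually_update_mem (hU : IsOpen U) {v : ι → ℂ} (hv : v ∈ U) (k : ι) :
    ∀ᶠ t in 𝓝 (v k), update v k t ∈ U :=
  (continuous_const.update k continuous_id).continuousAt.preimage_mem_nhds
    (hU.mem_nhds (by simpa using hv))

lemma pd_congr (hU : IsOpen U) (h : EqOn F G U) (k : ι) : EqOn (pd k F) (pd k G) U :=
  fun _ hv => EventuallyEq.deriv_eq ((eventually_update_mem hU hv k).mono fun _ ht => h ht)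

lemma foldr_pd_congr (hU : IsOpen U) (h : EqOn F G U) (L : List ι) :
    EqOn (L.foldr pd F) (L.foldr pd G) U := by
  induction L with
  | nil => exact h
  | cons k L ih => exact pd_congr hU ih k

lemma pd_eq_of_hasDerivAt {v : ι → ℂ} {k : ι} {F' : ℂ}
    (h : HasDerivAt (fun t => F (update v k t)) F' (v k)) : pd k F v = F' :=
  h.deriv

lemma hasDerivAt_comp_update [Fintype ι] {v : ι → ℂ} (hF : DifferentiableAt ℂ F v) (k : ι) :
    HasDerivAt (fun t => F (update v k t)) (fderiv ℂ F v (Pi.single k (1 : ℂ))) (v k) :=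
  hF.hasFDerivAt.comp_hasDerivAt_of_eq (v k) (hasDerivAt_update v k (v k)) (update_eq_self k v).symm

lemma contDiffOn_pd [Fintype ι] (hU : IsOpen U) (hF : ContDiffOn ℂ ∞ F U) (k : ι) :
    ContDiffOn ℂ ∞ (pd k F) U := by
  rw [contDiffOn_infty_iff_fderiv_of_isOpen hU] at hF
  refine (hF.2.clm_apply (contDiffOn_const (c := Pi.single k (1 : ℂ)))).congr fun v hv => ?_
  exact pd_eq_of_hasDerivAt (hasDerivAt_comp_update (hF.1.differentiableAt (hU.mem_nhds hv)) k)

lemma contDiffOn_foldr_pd [Fintype ι] (hU : IsOpen U) (hF : ContDiffOn ℂ ∞ F U) (L : List ι) :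
    ContDiffOn ℂ ∞ (L.foldr pd F) U := by
  induction L with
  | nil => exact hF
  | cons k L ih => exact contDiffOn_pd hU ih k

lemma pd_add [Fintype ι] (hU : IsOpen U) (hF : ContDiffOn ℂ ∞ F U) (hG : ContDiffOn ℂ ∞ G U)
    (k : ι) : EqOn (pd k (F + G)) (pd k F + pd k G) U := by
  intro v hv
  have hd {H : (ι → ℂ) → ℂ} (hH : ContDiffOn ℂ ∞ H U) :=
    hasDerivAt_comp_update ((hH.differentiableOn (by simp)).differentiableAt (hU.mem_nhds hv)) k
  rw [Pi.add_apply, pd_eq_of_hasDerivAt (hd hF), pd_eq_of_hasDerivAt (hd hG)]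
  exact pd_eq_of_hasDerivAt ((hd hF).fun_add (hd hG))

lemma foldr_pd_zero (L : List ι) : L.foldr pd (0 : (ι → ℂ) → ℂ) = 0 := by
  induction L with
  | nil => rfl
  | cons k L ih =>
    funext v
    rw [List.foldr_cons, ih]
    exact deriv_const _ _

lemma pd_mul_of_update_eq {c : (ι → ℂ) → ℂ} {k : ι} (hc : ∀ v t, c (update v k t) = c v) :
    pd k (c * G) = c * pd k G := by
  funext v
  simp only [pd, Pi.mul_apply, hc]
  exact deriv_const_mul_field _

lemma foldr_pd_mul_of_update_eq {c : (ι → ℂ) → ℂ} {L : List ι}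
    (hc : ∀ k ∈ L, ∀ v t, c (update v k t) = c v) :
    L.foldr pd (c * G) = c * L.foldr pd G := by
  induction L with
  | nil => rfl
  | cons k L ih =>
    rw [List.foldr_cons, List.foldr_cons, ih fun k' hk' => hc k' (List.mem_cons_of_mem _ hk'),
      pd_mul_of_update_eq (hc k List.mem_cons_self)]

lemma foldr_pd_add [Fintype ι] (hU : IsOpen U) (hF : ContDiffOn ℂ ∞ F U)
    (hG : ContDiffOn ℂ ∞ G U) (L : List ι) :
    EqOn (L.foldr pd (F + G)) (L.foldr pd F + L.foldr pd G) U := by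
  induction L with
  | nil => exact fun _ _ => rfl
  | cons k L ih =>
    exact (pd_congr hU ih k).trans
      (pd_add hU (contDiffOn_foldr_pd hU hF L) (contDiffOn_foldr_pd hU hG L) k)

lemma foldr_pd_sum [Fintype ι] (hU : IsOpen U) {κ : Type*} {T : Finset κ}
    {G : κ → (ι → ℂ) → ℂ} (hG : ∀ x ∈ T, ContDiffOn ℂ ∞ (G x) U) (L : List ι) :
    EqOn (L.foldr pd (∑ x ∈ T, G x)) (∑ x ∈ T, L.foldr pd (G x)) U := by
  classical
  induction T using Finset.induction_on with
  | empty => simp [foldr_pd_zero, EqOn]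
  | insert x T hx ih =>
    rw [Finset.forall_mem_insert] at hG
    have hT : ContDiffOn ℂ ∞ (∑ y ∈ T, G y) U := by
      simpa only [Finset.sum_fn] using ContDiffOn.sum hG.2
    rw [Finset.sum_insert hx, Finset.sum_insert hx]
    exact (foldr_pd_add hU hG.1 hT L).trans fun v hv => by simp [ih hG.2 hv]

lemma hasDerivAt_update_apply [Fintype ι] (v : ι → ℂ) (k k' : ι) :
    HasDerivAt (fun t => update v k t k') (if k' = k then 1 else 0) (v k) := by
  simpa [Pi.single_apply] using hasDerivAt_pi.1 (hasDerivAt_update v k (v k)) k'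

end PartialDeriv

lemma hasDerivAt_finset_prod_of_logDeriv {𝕜 κ : Type*} [NontriviallyNormedField 𝕜]
    [DecidableEq κ] {T : Finset κ} {f : κ → 𝕜 → 𝕜} {g : κ → 𝕜} {x : 𝕜}
    (hf : ∀ i ∈ T, HasDerivAt (f i) (f i x * g i) x) :
    HasDerivAt (fun y => ∏ i ∈ T, f i y) ((∏ i ∈ T, f i x) * ∑ i ∈ T, g i) x := by
  refine (HasDerivAt.fun_finsetProd hf).congr_deriv ?_
  rw [Finset.mul_sum]
  refine Finset.sum_congr rfl fun i hi => ?_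
  rw [smul_eq_mul, ← mul_assoc, Finset.prod_erase_mul _ _ hi]

section RookSum

variable {R : Type*} [CommRing R]

-- `C(b, k) · a!/(a-k)!` counts the placements of `k` non-attacking rooks on an `a × b` board.
def rookSum (X Y : R) (a b : ℕ) : R :=
  ∑ k ∈ range (b + 1), (b.choose k * a.descFactorial k : R) * X ^ (a - k) * X ^ (b - k) * Y ^ k

lemma rookSum_zero (X Y : R) (a : ℕ) : rookSum X Y a 0 = X ^ a := by
  simp [rookSum]

lemma descFactorial_succ_eq_mul_descFactorial_sub_one (a k : ℕ) :
    a.descFactorial (k + 1) = a * (a - 1).descFactorial k := by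
  cases a with
  | zero => simp
  | succ a => exact Nat.succ_descFactorial_succ a k

lemma rookSum_succ (X Y : R) (a b : ℕ) :
    rookSum X Y a (b + 1) = X * rookSum X Y a b + a * Y * rookSum X Y (a - 1) b := by
  have hX : X * rookSum X Y a b = ∑ k ∈ range (b + 1),
      (b.choose (k + 1) * a.descFactorial (k + 1) : R) * X ^ (a - (k + 1)) * X ^ (b - k) *
        Y ^ (k + 1) + X ^ a * X ^ (b + 1) := by
    rw [rookSum, Finset.mul_sum, sum_range_succ', sum_range_succ, Nat.choose_succ_self]
    simp only [Nat.cast_zero, zero_mul, add_zero]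
    congr 1
    · refine sum_congr rfl fun k hk => ?_
      rw [show b - k = b - (k + 1) + 1 by have := mem_range.1 hk; omega]
      ring
    · simp only [Nat.choose_zero_right, Nat.cast_one, Nat.descFactorial_zero, mul_one, tsub_zero,
        one_mul, pow_zero]
      ring
  have hY : a * Y * rookSum X Y (a - 1) b = ∑ k ∈ range (b + 1),
      (b.choose k * a.descFactorial (k + 1) : R) * X ^ (a - (k + 1)) * X ^ (b - k) *
        Y ^ (k + 1) := by
    rw [rookSum, Finset.mul_sum]
    refine sum_congr rfl fun k _ => ?_
    rw [descFactorial_succ_eq_mul_descFactorial_sub_one, show a - (k + 1) = a - 1 - k by omega]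
    push_cast
    ring
  rw [hX, hY, rookSum, sum_range_succ']
  simp only [Nat.choose_succ_succ', Nat.cast_add, add_mul, sum_add_distrib, Nat.add_sub_add_right,
    Nat.choose_zero_right, Nat.cast_one, Nat.descFactorial_zero, mul_one, tsub_zero, one_mul,
    pow_zero]
  ring

lemma rookSum_eq_sum_reflect (X Y : R) {a b : ℕ} (hba : b ≤ a) :
    rookSum X Y a b = ∑ k ∈ range (b + 1),
      (b.choose k * a.choose (a - b + k) * (b - k).factorial : R) * X ^ (a - b + 2 * k) *
        Y ^ (b - k) := by
  rw [rookSum, ← sum_range_reflect]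
  refine sum_congr rfl fun k hk => ?_
  have hkb : k ≤ b := Nat.lt_succ_iff.1 (mem_range.1 hk)
  rw [Nat.add_sub_cancel, Nat.choose_symm hkb, Nat.descFactorial_eq_factorial_mul_choose,
    ← Nat.choose_symm (show b - k ≤ a by omega), show a - (b - k) = a - b + k by omega,
    show b - (b - k) = k by omega, show a - b + 2 * k = a - b + k + k by omega, pow_add]
  push_cast
  ring

lemma rookSum_mul_sq_eq (x q : R) {a b : ℕ} (hba : b ≤ a) :
    rookSum (x * q) (q ^ 2) a b = x ^ (a - b) * q ^ (a + b) *
      ∑ k ∈ range (b + 1), (b.choose k * a.choose (a - b + k) * (b - k).factorial : R) *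
        (x ^ 2) ^ k := by
  rw [rookSum_eq_sum_reflect _ _ hba, Finset.mul_sum]
  refine sum_congr rfl fun k hk => ?_
  have hkb : k ≤ b := Nat.lt_succ_iff.1 (mem_range.1 hk)
  rw [mul_pow, ← pow_mul, show a + b = a - b + 2 * k + 2 * (b - k) by omega,
    pow_add q (a - b + 2 * k), pow_add x (a - b), pow_mul x]
  ring

end RookSum

section Factors

variable {s : ℕ}

def domF (s : ℕ) : Set ((Fin s ⊕ Fin s) → ℂ) := {v | ∀ i j, 1 - v (.inl i) * v (.inr j) ≠ 0}

-- `logDerivZ s i = ∂ log F / ∂z_i`, `logDerivW s j = ∂ log F / ∂w_j`,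
-- `dwLogDerivZ s i j = ∂ (logDerivZ s i) / ∂w_j`, and on `domF s`, `derivZF s A = ∂_{z_A} F`.
noncomputable def factor (s : ℕ) (i j : Fin s) (v : (Fin s ⊕ Fin s) → ℂ) : ℂ :=
  (1 - v (.inl i) * v (.inr j))⁻¹

noncomputable def logDerivZ (s : ℕ) (i : Fin s) (v : (Fin s ⊕ Fin s) → ℂ) : ℂ :=
  ∑ j, v (.inr j) * factor s i j v

noncomputable def logDerivW (s : ℕ) (j : Fin s) (v : (Fin s ⊕ Fin s) → ℂ) : ℂ :=
  ∑ i, v (.inl i) * factor s i j v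

noncomputable def dwLogDerivZ (s : ℕ) (i j : Fin s) (v : (Fin s ⊕ Fin s) → ℂ) : ℂ :=
  factor s i j v + v (.inl i) * v (.inr j) * factor s i j v ^ 2

noncomputable def derivZF (s : ℕ) (A : Finset (Fin s)) (v : (Fin s ⊕ Fin s) → ℂ) : ℂ :=
  FF s v * ∏ i ∈ A, logDerivZ s i v

lemma isOpen_domF : IsOpen (domF s) := by
  simp only [domF, ofPred_forall]
  exact isOpen_iInter_of_finite fun i => isOpen_iInter_of_finite fun j =>
    isOpen_ne_fun (by fun_prop) continuous_const

variable {v : (Fin s ⊕ Fin s) → ℂ}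

lemma hasDerivAt_factor_update (hv : v ∈ domF s) (i j : Fin s) (k : Fin s ⊕ Fin s) :
    HasDerivAt (fun t => factor s i j (update v k t))
      (factor s i j v * (((if .inl i = k then v (.inr j) else 0) +
        (if .inr j = k then v (.inl i) else 0)) * factor s i j v)) (v k) := by
  have h := (((hasDerivAt_update_apply v k (.inl i)).fun_mul
    (hasDerivAt_update_apply v k (.inr j))).const_sub 1).fun_inv (by simpa using hv i j)
  simp only [update_eq_self] at h
  refine h.congr_deriv ?_
  rw [neg_neg, div_eq_mul_inv, ← inv_pow]
  simp only [factor]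
  split_ifs <;> ring

lemma hasDerivAt_FF_update (hv : v ∈ domF s) (k : Fin s ⊕ Fin s) :
    HasDerivAt (fun t => FF s (update v k t))
      (FF s v * ∑ i, ∑ j, ((if .inl i = k then v (.inr j) else 0) +
        (if .inr j = k then v (.inl i) else 0)) * factor s i j v) (v k) := by
  have hrow (i : Fin s) := hasDerivAt_finset_prod_of_logDeriv (T := Finset.univ) (x := v k)
    (f := fun j t => factor s i j (update v k t)) fun j _ => by
      simpa only [update_eq_self] using hasDerivAt_factor_update hv i j k
  have h := hasDerivAt_finset_prod_of_logDeriv (T := Finset.univ) (x := v k)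
    (f := fun i t => ∏ j, factor s i j (update v k t)) fun i _ => hrow i
  simp only [update_eq_self] at h
  exact h

lemma hasDerivAt_FF_update_inl (hv : v ∈ domF s) (i : Fin s) :
    HasDerivAt (fun t => FF s (update v (.inl i) t)) (logDerivZ s i v * FF s v) (v (.inl i)) := by
  refine (hasDerivAt_FF_update hv (.inl i)).congr_deriv ?_
  simp [logDerivZ, mul_comm]

lemma hasDerivAt_FF_update_inr (hv : v ∈ domF s) (j : Fin s) :
    HasDerivAt (fun t => FF s (update v (.inr j) t)) (logDerivW s j v * FF s v) (v (.inr j)) := by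
  refine (hasDerivAt_FF_update hv (.inr j)).congr_deriv ?_
  simp [logDerivW, mul_comm]

lemma hasDerivAt_logDerivZ_update (hv : v ∈ domF s) (i : Fin s) (k : Fin s ⊕ Fin s) :
    HasDerivAt (fun t => logDerivZ s i (update v k t))
      (∑ j, ((if .inr j = k then 1 else 0) * factor s i j v + v (.inr j) * (factor s i j v *
        (((if .inl i = k then v (.inr j) else 0) + (if .inr j = k then v (.inl i) else 0)) *
          factor s i j v)))) (v k) := by
  have h := HasDerivAt.fun_sum (u := Finset.univ) fun j _ =>
    (hasDerivAt_update_apply v k (.inr j)).fun_mul (hasDerivAt_factor_update hv i j k)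
  simp only [update_eq_self] at h
  exact h

lemma hasDerivAt_derivZF_update {A : Finset (Fin s)} {k : Fin s ⊕ Fin s} {a : ℂ} {d : Fin s → ℂ}
    (hF : HasDerivAt (fun t => FF s (update v k t)) (a * FF s v) (v k))
    (hg : ∀ i ∈ A, HasDerivAt (fun t => logDerivZ s i (update v k t)) (d i) (v k)) :
    HasDerivAt (fun t => derivZF s A (update v k t))
      (a * derivZF s A v + ∑ i ∈ A, d i * derivZF s (A.erase i) v) (v k) := by
  have h := hF.fun_mul (HasDerivAt.fun_finsetProd hg)
  simp only [update_eq_self] at h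
  refine h.congr_deriv ?_
  rw [Finset.mul_sum]
  congr 1
  · simp only [derivZF]; ring
  · exact Finset.sum_congr rfl fun i _ => by simp only [derivZF, smul_eq_mul]; ring

lemma pd_inl_derivZF {A : Finset (Fin s)} {i : Fin s} (hi : i ∉ A) :
    EqOn (pd (.inl i) (derivZF s A)) (derivZF s (insert i A)) (domF s) := by
  intro v hv
  refine pd_eq_of_hasDerivAt ((hasDerivAt_derivZF_update (hasDerivAt_FF_update_inl hv i)
    (d := 0) fun i' hi' => ?_).congr_deriv ?_)
  · have hne : i' ≠ i := fun h => hi (h ▸ hi')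
    simpa [hne] using hasDerivAt_logDerivZ_update hv i' (.inl i)
  · simp only [derivZF, Finset.prod_insert hi, Pi.zero_apply, zero_mul, Finset.sum_const_zero]
    ring

lemma pd_inr_derivZF (A : Finset (Fin s)) (j : Fin s) :
    EqOn (pd (.inr j) (derivZF s A))
      (logDerivW s j * derivZF s A + ∑ i ∈ A, dwLogDerivZ s i j * derivZF s (A.erase i))
      (domF s) := by
  intro v hv
  refine pd_eq_of_hasDerivAt ((hasDerivAt_derivZF_update (hasDerivAt_FF_update_inr hv j)
    (d := fun i => dwLogDerivZ s i j v) fun i _ => ?_).congr_deriv (by simp))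
  refine (hasDerivAt_logDerivZ_update hv i (.inr j)).congr_deriv ?_
  simp only [Sum.inr.injEq, ite_mul, one_mul, zero_mul, reduceCtorEq, ↓reduceIte, zero_add, mul_ite,
    mul_zero, sum_add_distrib, sum_ite_eq', Finset.mem_univ, dwLogDerivZ]
  ring

@[fun_prop]
lemma contDiffOn_factor (i j : Fin s) : ContDiffOn ℂ ∞ (factor s i j) (domF s) := by
  unfold factor
  fun_prop (disch := exact fun _ hv => hv i j)

@[fun_prop]
lemma contDiffOn_FF : ContDiffOn ℂ ∞ (FF s) (domF s) := by
  unfold FF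
  fun_prop (disch := exact fun _ hv => hv _ _)

lemma contDiffOn_derivZF (A : Finset (Fin s)) : ContDiffOn ℂ ∞ (derivZF s A) (domF s) := by
  unfold derivZF logDerivZ
  fun_prop

lemma contDiffOn_logDerivW (j : Fin s) : ContDiffOn ℂ ∞ (logDerivW s j) (domF s) := by
  unfold logDerivW
  fun_prop

lemma contDiffOn_dwLogDerivZ (i j : Fin s) : ContDiffOn ℂ ∞ (dwLogDerivZ s i j) (domF s) := by
  unfold dwLogDerivZ
  fun_prop

lemma logDerivW_update_inr {j j' : Fin s} (h : j' ≠ j) (t : ℂ) :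
    logDerivW s j (update v (.inr j') t) = logDerivW s j v := by
  simp [logDerivW, factor, Ne.symm h]

lemma dwLogDerivZ_update_inr {i j j' : Fin s} (h : j' ≠ j) (t : ℂ) :
    dwLogDerivZ s i j (update v (.inr j') t) = dwLogDerivZ s i j v := by
  simp [dwLogDerivZ, factor, Ne.symm h]

lemma foldr_pd_inl_FF {L : List (Fin s)} (hL : L.Nodup) :
    EqOn ((L.map .inl).foldr pd (FF s)) (derivZF s L.toFinset) (domF s) := by
  induction L with
  | nil => simp [EqOn, derivZF]
  | cons i L ih =>
    rw [List.nodup_cons] at hL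
    rw [List.map_cons, List.foldr_cons, List.toFinset_cons]
    exact (pd_congr isOpen_domF (ih hL.2) _).trans
      (pd_inl_derivZF (by simpa using hL.1))

end Factors

section ConstantPoint

variable {s : ℕ} {c : ℂ}

lemma const_mem_domF (hc : 1 - c ^ 2 ≠ 0) : (fun _ => c) ∈ domF s :=
  fun _ _ => by rwa [← sq]

lemma factor_const (i j : Fin s) : factor s i j (fun _ => c) = (1 - c ^ 2)⁻¹ := by
  rw [factor, sq]

lemma derivZF_const (A : Finset (Fin s)) :
    derivZF s A (fun _ => c) = (1 - c ^ 2)⁻¹ ^ s ^ 2 * (s * c * (1 - c ^ 2)⁻¹) ^ A.card := by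
  have hF : FF s (fun _ => c) = (1 - c ^ 2)⁻¹ ^ s ^ 2 := by
    simp only [FF, ← sq, prod_const, card_univ, Fintype.card_fin, ← pow_mul]
  simp [derivZF, hF, logDerivZ, factor_const, mul_assoc]

lemma logDerivW_const (j : Fin s) : logDerivW s j (fun _ => c) = s * c * (1 - c ^ 2)⁻¹ := by
  simp [logDerivW, factor_const, mul_assoc]

lemma dwLogDerivZ_const (hc : 1 - c ^ 2 ≠ 0) (i j : Fin s) :
    dwLogDerivZ s i j (fun _ => c) = (1 - c ^ 2)⁻¹ ^ 2 := by
  rw [dwLogDerivZ, factor_const]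
  field_simp
  ring

lemma foldr_pd_inr_derivZF_const (hc : 1 - c ^ 2 ≠ 0) {L : List (Fin s)} (hL : L.Nodup)
    (A : Finset (Fin s)) :
    (L.map .inr).foldr pd (derivZF s A) (fun _ => c) =
      (1 - c ^ 2)⁻¹ ^ s ^ 2 *
        rookSum (s * c * (1 - c ^ 2)⁻¹) ((1 - c ^ 2)⁻¹ ^ 2) A.card L.length := by
  induction L using List.reverseRecOn generalizing A with
  | nil => simp [derivZF_const, rookSum_zero]
  | append_singleton L j ih =>
    -- The derivative in `w_j` acts first; its coefficients pass through the remaining ones.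
    rw [List.nodup_append] at hL
    obtain ⟨hL, -, hjL⟩ := hL
    have hinv : ∀ k ∈ L.map Sum.inr, ∀ (v : (Fin s ⊕ Fin s) → ℂ) t,
        logDerivW s j (update v k t) = logDerivW s j v ∧
          ∀ i, dwLogDerivZ s i j (update v k t) = dwLogDerivZ s i j v := by
      simp only [List.mem_map]
      rintro _ ⟨j', hj', rfl⟩ v t
      have hne : j' ≠ j := fun h => hjL j' hj' j (by simp) h
      exact ⟨logDerivW_update_inr hne t, fun i => dwLogDerivZ_update_inr hne t⟩
    have hterm (i : Fin s) :
        ContDiffOn ℂ ∞ (dwLogDerivZ s i j * derivZF s (A.erase i)) (domF s) :=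
      (contDiffOn_dwLogDerivZ i j).mul (contDiffOn_derivZF _)
    have hsum :
        ContDiffOn ℂ ∞ (∑ i ∈ A, dwLogDerivZ s i j * derivZF s (A.erase i)) (domF s) := by
      rw [Finset.sum_fn]
      exact ContDiffOn.sum fun i _ => hterm i
    have hW : ContDiffOn ℂ ∞ (logDerivW s j * derivZF s A) (domF s) :=
      (contDiffOn_logDerivW j).mul (contDiffOn_derivZF A)
    have hpt := const_mem_domF (s := s) hc
    rw [List.map_append, List.foldr_append, List.map_singleton, List.foldr_cons, List.foldr_nil,
      foldr_pd_congr isOpen_domF (pd_inr_derivZF A j) _ hpt,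
      foldr_pd_add isOpen_domF hW hsum _ hpt, Pi.add_apply,
      foldr_pd_sum isOpen_domF (fun i _ => hterm i) _ hpt, Finset.sum_apply,
      foldr_pd_mul_of_update_eq fun k hk => (hinv k hk · · |>.1)]
    simp only [Pi.mul_apply, foldr_pd_mul_of_update_eq fun k hk => (hinv k hk · · |>.2 _), ih hL,
      logDerivW_const, dwLogDerivZ_const hc]
    rw [Finset.sum_congr rfl fun i hi => by rw [card_erase_of_mem hi], sum_const, nsmul_eq_mul,
      List.length_append, List.length_singleton, rookSum_succ]
    ring

lemma mixedDerivF_const (hc : 1 - c ^ 2 ≠ 0) (h₁ h₂ : ℕ) :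
    mixedDerivF s h₁ h₂ (fun _ => c) = (1 - c ^ 2)⁻¹ ^ s ^ 2 *
      rookSum (s * c * (1 - c ^ 2)⁻¹) ((1 - c ^ 2)⁻¹ ^ 2) (s - h₁) (s - h₂) := by
  set Lz := (List.finRange (s - h₁)).map (Fin.castLE (Nat.sub_le s h₁))
  set Lw := (List.finRange (s - h₂)).map (Fin.castLE (Nat.sub_le s h₂))
  have hLz : Lz.Nodup := (List.nodup_finRange _).map (Fin.castLE_injective _)
  have hLw : Lw.Nodup := (List.nodup_finRange _).map (Fin.castLE_injective _)
  have hsplit : mixedDerivF s h₁ h₂ = (Lw.map .inr).foldr pd ((Lz.map .inl).foldr pd (FF s)) := by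
    simp only [mixedDerivF, varList, List.foldr_append, List.map_map, Lz, Lw]
    rfl
  rw [hsplit, foldr_pd_congr isOpen_domF (foldr_pd_inl_FF hLz) _ (const_mem_domF hc),
    foldr_pd_inr_derivZF_const hc hLw, List.toFinset_card_of_nodup hLz]
  simp only [Lz, Lw, List.length_map, List.length_finRange]

end ConstantPoint

theorem mixed_derivative_F_at_diagonal_general (s h₁ h₂ : ℕ)
    (h12 : h₁ ≤ h₂) (h2s : h₂ ≤ s) (r : ℝ) (hr0 : 0 ≤ r) (hr1 : r ≠ 1) :
    mixedDerivF s h₁ h₂ (fun _ => (-r : ℂ)) =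
      (-(s : ℂ) * (r : ℂ)) ^ (h₂ - h₁) / (1 - (r : ℂ) ^ 2) ^ (s ^ 2 + 2 * s - h₁ - h₂) *
        ∑ k ∈ Finset.range (s - h₂ + 1),
          (Nat.choose (s - h₂) k : ℂ) * (Nat.choose (s - h₁) (h₂ - h₁ + k) : ℂ) *
            (Nat.factorial (s - k - h₂) : ℂ) * ((s : ℂ) ^ 2 * (r : ℂ) ^ 2) ^ k := by
  have hr : (r : ℂ) ^ 2 ≠ 1 := by
    exact_mod_cast (pow_eq_one_iff_of_nonneg hr0 two_ne_zero).not.2 hr1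
  have hq : 1 - (-(r : ℂ)) ^ 2 ≠ 0 := by
    rw [neg_sq]
    exact sub_ne_zero.2 hr.symm
  rw [mixedDerivF_const hq, rookSum_mul_sq_eq _ _ (by omega),
    show s - h₁ - (s - h₂) = h₂ - h₁ by omega,
    show s ^ 2 + 2 * s - h₁ - h₂ = s ^ 2 + (s - h₁ + (s - h₂)) by omega]
  simp only [neg_sq, mul_pow, Nat.sub_right_comm s h₂]
  rw [div_eq_mul_inv, ← inv_pow]
  ring

theorem mixed_derivative_F_at_diagonal (s h₁ h₂ : ℕ) (hs : 1 ≤ s)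
    (h12 : h₁ ≤ h₂) (h2s : h₂ ≤ s) (r : ℝ) (hr0 : 0 ≤ r) (hr1 : r ≠ 1) :
    mixedDerivF s h₁ h₂ (fun _ => (-r : ℂ)) =
      (-(s : ℂ) * (r : ℂ)) ^ (h₂ - h₁) / (1 - (r : ℂ) ^ 2) ^ (s ^ 2 + 2 * s - h₁ - h₂) *
        ∑ k ∈ Finset.range (s - h₂ + 1),
          (Nat.choose (s - h₂) k : ℂ) * (Nat.choose (s - h₁) (h₂ - h₁ + k) : ℂ) *
            (Nat.factorial (s - k - h₂) : ℂ) * ((s : ℂ) ^ 2 * (r : ℂ) ^ 2) ^ k :=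
  mixed_derivative_F_at_diagonal_general s h₁ h₂ h12 h2s r hr0 hr1

end MixedDeriv
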